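/- arXiv:math/0606150 — 2 statements merged into one kernel-verified Lean document; each statement's English description precedes it below -/
import Mathlib

section
/- Taylor re-expansion is multiplicative: for noncommutative power series f = Σ_I a_I (x−p)^I and f̃ = Σ_I ã_I (x−p)^I both convergent on P(p,r), and q ∈ P(p,r), the re-expansion map α(p,q) defined by α(p,q)(f) = Σ_J a_J(q) (x−q)^J with a_J(q) = Σ_{I≥J} (I choose J) a_I (q−p)^{I−J} satisfies α(p,q)(f·f̃) = α(p,q)(f)·α(p,q)(f̃); together with its obvious additivity and unitality, α(p,q) is an algebra homomorphism. -/
/-!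
Put `w(I, J) = (I choose J) (q - p)^(I - J)`, so that `a_J(q) = Σ_I a_I w(I, J)`. An embedding
of `J` into a concatenation `I I'` splits `J = J₁ J₂` into the letters landing in `I` and those
landing in `I'`; this gives `(I I' choose J) = Σ (I choose J₁) (I' choose J₂)` over the splittings
of `J`, and since the leftover letters multiply, `w(I I', J) = Σ w(I, J₁) w(I', J₂)`.
Multiplicativity is then a rearrangement: a word `K` with a cut point is the same as a pair
`(I, I')`, and the sum over pairs factors as a Cauchy product. All series converge absolutely by
the binomial bound `(I choose J) ε^J |q - p|^(I - J) ≤ (ε + |q - p|)^I`, applied with `ε > 0` so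
small that the polyradius `|q - p| + ε` still lies in the polydisc.
-/

/-- Convolution product on noncommutative power series. -/
noncomputable def ncMul {n : ℕ} (f g : List (Fin n) → ℂ) : List (Fin n) → ℂ :=
  fun K => ∑ i ∈ Finset.range (K.length + 1), f (K.take i) * g (K.drop i)

/-- `(I choose J)`: the number of order-preserving injective letter-respecting
maps from `J` to `I`. -/
noncomputable def chooseCount {n : ℕ} (I J : List (Fin n)) : ℕ :=
  Set.ncard {α : Fin J.length → Fin I.length |
    StrictMono α ∧ ∀ k, J.get k = I.get (α k)}

/-- `w^I`: product of the values of `w` over the letters of the word `I`. -/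
def wprod {n : ℕ} (w : Fin n → ℂ) (I : List (Fin n)) : ℂ := (I.map w).prod

/-- `(q−p)^{I−J}` (multiset difference of letters; independent of embedding). -/
noncomputable def diffProd {n : ℕ} (p q : Fin n → ℂ) (I J : List (Fin n)) : ℂ :=
  (((I : Multiset (Fin n)) - (J : Multiset (Fin n))).map
    fun i => q i - p i).prod

/-- The re-expansion coefficient `a_J(q) = Σ_{I ≥ J} (I choose J) a_I (q−p)^{I−J}`. -/
noncomputable def reCoeff {n : ℕ} (a : List (Fin n) → ℂ) (p q : Fin n → ℂ)
    (J : List (Fin n)) : ℂ :=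
  ∑' I : List (Fin n), (chooseCount I J : ℂ) * a I * diffProd p q I J

lemma Fin.exists_succ_comp_eq {m k : ℕ} {f : Fin m → Fin (k + 1)} (hf : ∀ i, f i ≠ 0) :
    ∃ g : Fin m → Fin k, Fin.succ ∘ g = f :=
  ⟨fun i => (f i).pred (hf i), funext fun _ => Fin.succ_pred _ _⟩

namespace List

variable {α : Type*}

def subwordEmbeddings (I J : List α) : Set (Fin J.length → Fin I.length) :=
  {f | StrictMono f ∧ ∀ k, J.get k = I.get (f k)}

@[simp]
lemma subwordEmbeddings_nil_right (I : List α) : subwordEmbeddings I [] = Set.univ :=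
  Set.eq_univ_of_forall fun _ => ⟨fun i => i.elim0, fun i => i.elim0⟩

@[simp]
lemma subwordEmbeddings_nil_cons (y : α) (J : List α) : subwordEmbeddings [] (y :: J) = ∅ :=
  Set.eq_empty_of_forall_notMem fun f _ => (f 0).elim0

lemma succ_comp_mem_subwordEmbeddings_cons {x : α} {I J : List α}
    {g : Fin J.length → Fin I.length} :
    Fin.succ ∘ g ∈ subwordEmbeddings (x :: I) J ↔ g ∈ subwordEmbeddings I J :=
  and_congr_left' ⟨fun h _ _ hab => Fin.succ_lt_succ_iff.mp (h hab),
    fun h _ _ hab => Fin.succ_lt_succ_iff.mpr (h hab)⟩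

lemma cons_zero_succ_comp_mem_subwordEmbeddings_cons_cons {x y : α} {I J : List α}
    {g : Fin J.length → Fin I.length} :
    (Fin.cons 0 (Fin.succ ∘ g) : Fin (y :: J).length → Fin (x :: I).length) ∈
      subwordEmbeddings (x :: I) (y :: J) ↔ y = x ∧ g ∈ subwordEmbeddings I J := by
  have hmono : StrictMono (Fin.cons 0 (Fin.succ ∘ g) : Fin (J.length + 1) → Fin (I.length + 1))
      ↔ StrictMono (Fin.succ ∘ g) := by
    simp [Fin.strictMono_cons, Fin.succ_pos]
  rw [← succ_comp_mem_subwordEmbeddings_cons (x := x) (g := g)]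
  change (StrictMono _ ∧ ∀ k : Fin (J.length + 1), _) ↔ y = x ∧ (StrictMono _ ∧ ∀ k, _)
  rw [hmono, Fin.forall_fin_succ]
  simp only [Fin.cons_zero, Fin.cons_succ]
  tauto

lemma subwordEmbeddings_cons_cons [DecidableEq α] (x y : α) (I J : List α) :
    subwordEmbeddings (x :: I) (y :: J) =
      (Fin.succ ∘ ·) '' subwordEmbeddings I (y :: J) ∪
        if y = x then (fun g => Fin.cons 0 (Fin.succ ∘ g)) '' subwordEmbeddings I J else ∅ := by
  ext f
  constructor
  · intro hf
    by_cases h0 : f 0 = 0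
    · obtain ⟨g, hg⟩ := Fin.exists_succ_comp_eq (f := Fin.tail f) fun i h =>
        (hf.1 (Fin.succ_pos i)).ne' (h.trans h0.symm)
      have hfg : f = Fin.cons 0 (Fin.succ ∘ g) := by rw [hg, ← h0, Fin.cons_self_tail]
      subst hfg
      obtain ⟨rfl, hgJ⟩ := cons_zero_succ_comp_mem_subwordEmbeddings_cons_cons.mp hf
      exact Or.inr (by simpa using ⟨g, hgJ, rfl⟩)
    · obtain ⟨g, rfl⟩ := Fin.exists_succ_comp_eq fun i h =>
        h0 (Fin.le_zero_iff.mp ((hf.1.monotone (Fin.zero_le i)).trans_eq h))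
      exact Or.inl ⟨g, succ_comp_mem_subwordEmbeddings_cons.mp hf, rfl⟩
  · rintro (⟨g, hg, rfl⟩ | hf)
    · exact succ_comp_mem_subwordEmbeddings_cons.mpr hg
    · split_ifs at hf with hyx
      · obtain ⟨g, hg, rfl⟩ := hf
        exact cons_zero_succ_comp_mem_subwordEmbeddings_cons_cons.mpr ⟨hyx, hg⟩
      · exact hf.elim

lemma sublist_of_subwordEmbeddings_nonempty {I J : List α}
    (h : (subwordEmbeddings I J).Nonempty) : J <+ I := by
  obtain ⟨f, hf, hget⟩ := h
  exact sublist_iff_exists_fin_orderEmbedding_get_eq.mpr ⟨OrderEmbedding.ofStrictMono f hf, hget⟩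

def splitsEquiv (α : Type*) : List α × List α ≃ Σ K : List α, Fin (K.length + 1) where
  toFun z := ⟨z.1 ++ z.2, ⟨z.1.length, by simp⟩⟩
  invFun σ := (σ.1.take σ.2, σ.1.drop σ.2)
  left_inv z := by simp
  right_inv := by
    rintro ⟨K, i⟩
    refine Sigma.ext (take_append_drop _ _) ((Fin.heq_ext_iff (by simp)).mpr ?_)
    simpa using Nat.le_of_lt_succ i.2

lemma tsum_sum_range_take_drop {E : Type*} [AddCommMonoid E] [TopologicalSpace E]
    [ContinuousAdd E] [T3Space E] {φ : List α × List α → E} (hφ : Summable φ) :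
    ∑' K : List α, ∑ i ∈ Finset.range (K.length + 1), φ (K.take i, K.drop i) = ∑' z, φ z := by
  have hσ : Summable fun σ => φ ((splitsEquiv α).symm σ) :=
    (splitsEquiv α).symm.summable_iff.mpr hφ
  rw [← (splitsEquiv α).symm.tsum_eq, hσ.tsum_sigma' fun _ => .of_finite]
  refine tsum_congr fun K => ?_
  rw [tsum_fintype]
  exact (Fin.sum_univ_eq_sum_range (fun i => φ (K.take i, K.drop i)) _).symm

end List

open List

section

variable {n : ℕ}

lemma chooseCount_eq_ncard (I J : List (Fin n)) :
    chooseCount I J = (subwordEmbeddings I J).ncard := rfl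

@[simp]
lemma chooseCount_nil_right (I : List (Fin n)) : chooseCount I [] = 1 := by
  rw [chooseCount_eq_ncard, subwordEmbeddings_nil_right, Set.ncard_univ]
  simp

@[simp]
lemma chooseCount_nil_cons (y : Fin n) (J : List (Fin n)) : chooseCount [] (y :: J) = 0 := by
  rw [chooseCount_eq_ncard, subwordEmbeddings_nil_cons, Set.ncard_empty]

lemma chooseCount_cons_cons (x y : Fin n) (I J : List (Fin n)) :
    chooseCount (x :: I) (y :: J) =
      chooseCount I (y :: J) + if y = x then chooseCount I J else 0 := by
  have hdisj : Disjoint ((Fin.succ ∘ ·) '' subwordEmbeddings I (y :: J))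
      (if y = x then (fun g => Fin.cons 0 (Fin.succ ∘ g)) '' subwordEmbeddings I J else ∅) := by
    split_ifs
    · rw [Set.disjoint_left]
      rintro _ ⟨g, -, rfl⟩ ⟨g', -, hg'⟩
      have h0 := congrFun hg' 0
      simp only [Fin.cons_zero, Function.comp_apply] at h0
      exact Fin.succ_ne_zero _ h0.symm
    · exact Set.disjoint_empty _
  simp only [chooseCount_eq_ncard]
  rw [subwordEmbeddings_cons_cons, Set.ncard_union_eq hdisj,
    Set.ncard_image_of_injective _ (Fin.succ_injective _).comp_left]
  split_ifs
  · rw [Set.ncard_image_of_injective _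
      fun g g' h => (Fin.succ_injective _).comp_left (Fin.cons_right_injective _ h)]
  · rw [Set.ncard_empty]

lemma chooseCount_append (I I' J : List (Fin n)) :
    chooseCount (I ++ I') J =
      ∑ i ∈ Finset.range (J.length + 1),
        chooseCount I (J.take i) * chooseCount I' (J.drop i) := by
  induction I generalizing J with
  | nil =>
    cases J with
    | nil => simp
    | cons y J => simp [Finset.sum_range_succ']
  | cons x I ih =>
    cases J with
    | nil => simp
    | cons y J =>
      rw [List.cons_append, chooseCount_cons_cons, ih, ih]
      simp only [List.length_cons, Finset.sum_range_succ' _ (J.length + 1), List.take_succ_cons,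
        List.drop_succ_cons, take_zero, drop_zero, chooseCount_cons_cons, chooseCount_nil_right,
        add_mul, Finset.sum_add_distrib]
      split_ifs
      · ring
      · simp

lemma coe_le_of_chooseCount_ne_zero {I J : List (Fin n)} (h : chooseCount I J ≠ 0) :
    (J : Multiset (Fin n)) ≤ I :=
  Multiset.coe_le.mpr (sublist_of_subwordEmbeddings_nonempty
    (Set.nonempty_of_ncard_ne_zero h)).subperm

lemma chooseCount_mul_prod_le {R : Type*} [CommSemiring R] [PartialOrder R] [IsOrderedRing R]
    {w v : Fin n → R} (hw : 0 ≤ w) (hv : 0 ≤ v) (I J : List (Fin n)) :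
    (chooseCount I J : R) * (J.map w).prod * (((I : Multiset (Fin n)) - J).map v).prod ≤
      (I.map (w + v)).prod := by
  induction I generalizing J with
  | nil => cases J <;> simp
  | cons x I ih =>
    have hP : 0 ≤ (I.map (w + v)).prod :=
      List.prod_nonneg fun _ h => by
        obtain ⟨i, -, rfl⟩ := List.mem_map.mp h
        exact add_nonneg (hw i) (hv i)
    cases J with
    | nil =>
      calc _ = v x * ((chooseCount I [] : R) * ([].map w).prod *
            (((I : Multiset (Fin n)) - ([] : List (Fin n))).map v).prod) := by simp
        _ ≤ v x * (I.map (w + v)).prod := mul_le_mul_of_nonneg_left (ih []) (hv x)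
        _ ≤ _ := by
          rw [List.map_cons, List.prod_cons, Pi.add_apply, add_mul]
          exact le_add_of_nonneg_left (mul_nonneg (hw x) hP)
    | cons y J =>
      have hskip : (chooseCount I (y :: J) : R) * ((y :: J).map w).prod *
          (((x :: I : List (Fin n)) - (y :: J : List (Fin n)) : Multiset (Fin n)).map v).prod ≤
            v x * (I.map (w + v)).prod := by
        by_cases hc : chooseCount I (y :: J) = 0
        · simp [hc, mul_nonneg (hv x) hP]
        rw [← Multiset.cons_coe, Multiset.cons_sub_of_le _ (coe_le_of_chooseCount_ne_zero hc),
          Multiset.map_cons, Multiset.prod_cons]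
        calc _ = v x * ((chooseCount I (y :: J) : R) * ((y :: J).map w).prod *
              ((I - (y :: J : List (Fin n)) : Multiset (Fin n)).map v).prod) := by ring
          _ ≤ _ := mul_le_mul_of_nonneg_left (ih _) (hv x)
      have htake : ((if y = x then chooseCount I J else 0 : ℕ) : R) * ((y :: J).map w).prod *
          (((x :: I : List (Fin n)) - (y :: J : List (Fin n)) : Multiset (Fin n)).map v).prod ≤
            w x * (I.map (w + v)).prod := by
        split_ifs with hyx
        · subst hyx
          rw [← Multiset.cons_coe, ← Multiset.cons_coe, ← Multiset.singleton_add,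
            ← Multiset.singleton_add, add_tsub_add_eq_tsub_left]
          calc _ = w y * ((chooseCount I J : R) * (J.map w).prod *
              (((I : Multiset (Fin n)) - J).map v).prod) := by
                simp only [map_cons, prod_cons, Multiset.coe_sub, Multiset.map_coe,
                  Multiset.prod_coe]
                ring
            _ ≤ _ := mul_le_mul_of_nonneg_left (ih _) (hw y)
        · simpa using mul_nonneg (hw x) hP
      calc _ = _ + _ := by rw [chooseCount_cons_cons, Nat.cast_add, add_mul, add_mul]
        _ ≤ v x * (I.map (w + v)).prod + w x * (I.map (w + v)).prod := add_le_add hskip htake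
        _ = _ := by simp only [map_cons, Pi.add_apply, prod_cons]; ring

noncomputable def taylorWeight (p q : Fin n → ℂ) (I J : List (Fin n)) : ℂ :=
  chooseCount I J * diffProd p q I J

lemma reCoeff_eq_tsum (a : List (Fin n) → ℂ) (p q : Fin n → ℂ) (J : List (Fin n)) :
    reCoeff a p q J = ∑' I, a I * taylorWeight p q I J := by
  simp only [reCoeff, taylorWeight]
  exact tsum_congr fun I => by ring

lemma norm_wprod (w : Fin n → ℂ) (I : List (Fin n)) :
    ‖wprod w I‖ = (I.map fun i => ‖w i‖).prod := by
  rw [wprod, List.norm_prod, List.map_map]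
  rfl

lemma norm_diffProd (p q : Fin n → ℂ) (I J : List (Fin n)) :
    ‖diffProd p q I J‖ = ((I - J : Multiset (Fin n)).map fun i => ‖q i - p i‖).prod := by
  rw [diffProd, ← Function.comp_def norm, ← Multiset.map_map]
  exact map_multiset_prod (normHom : ℂ →*₀ ℝ) _

lemma diffProd_append (p q : Fin n → ℂ) {I I' J J' : List (Fin n)}
    (hJ : (J : Multiset (Fin n)) ≤ I) (hJ' : (J' : Multiset (Fin n)) ≤ I') :
    diffProd p q (I ++ I') (J ++ J') = diffProd p q I J * diffProd p q I' J' := by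
  rw [diffProd, ← Multiset.coe_add, ← Multiset.coe_add, ← tsub_add_tsub_comm hJ hJ',
    Multiset.map_add, Multiset.prod_add]
  rfl

lemma taylorWeight_append (p q : Fin n → ℂ) (I I' J : List (Fin n)) :
    taylorWeight p q (I ++ I') J = ∑ i ∈ Finset.range (J.length + 1),
      taylorWeight p q I (J.take i) * taylorWeight p q I' (J.drop i) := by
  rw [taylorWeight, chooseCount_append, Nat.cast_sum, Finset.sum_mul]
  refine Finset.sum_congr rfl fun i _ => ?_
  by_cases h : chooseCount I (J.take i) = 0
  · simp [taylorWeight, h]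
  by_cases h' : chooseCount I' (J.drop i) = 0
  · simp [taylorWeight, h']
  rw [← J.take_append_drop i, diffProd_append p q (coe_le_of_chooseCount_ne_zero h)
    (coe_le_of_chooseCount_ne_zero h'), J.take_append_drop i, taylorWeight, taylorWeight]
  push_cast
  ring

lemma summable_norm_mul_taylorWeight (a : List (Fin n) → ℂ) (p q : Fin n → ℂ) (r : Fin n → ℝ)
    (hconv : ∀ z : Fin n → ℂ, (∀ i, ‖z i - p i‖ < r i) →
      Summable (fun I : List (Fin n) => ‖a I‖ * ‖wprod (fun i => z i - p i) I‖))
    (hq : ∀ i, ‖q i - p i‖ < r i) (J : List (Fin n)) :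
    Summable fun I => ‖a I * taylorWeight p q I J‖ := by
  set v : Fin n → ℝ := fun i => ‖q i - p i‖
  set w : Fin n → ℝ := fun i => (r i - v i) / 2
  have hw : ∀ i, 0 < w i := fun i => half_pos (sub_pos.mpr (hq i))
  have hv : 0 ≤ v := fun i => norm_nonneg _
  let z : Fin n → ℂ := fun i => p i + ((w i + v i : ℝ) : ℂ)
  have hz : ∀ i, ‖z i - p i‖ = w i + v i := fun i => by
    rw [add_sub_cancel_left, Complex.norm_real, Real.norm_of_nonneg (add_nonneg (hw i).le (hv i))]
  have hsum := hconv z fun i => by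
    rw [hz]
    simp only [w, v]
    linarith [hq i]
  have hwJ : 0 < (J.map w).prod :=
    List.prod_pos fun _ h => by obtain ⟨i, -, rfl⟩ := List.mem_map.mp h; exact hw i
  refine Summable.of_nonneg_of_le (fun _ => norm_nonneg _) (fun I => ?_)
    (hsum.div_const (J.map w).prod)
  have hbound := chooseCount_mul_prod_le (fun i => (hw i).le) hv I J
  rw [norm_mul, taylorWeight, norm_mul, norm_diffProd, norm_wprod, mul_div_assoc]
  gcongr
  rw [Complex.norm_natCast, le_div_iff₀ hwJ]
  calc _ = (chooseCount I J : ℝ) * (J.map w).prod * ((I - J : Multiset (Fin n)).map v).prod := by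
        ring
    _ ≤ (I.map (w + v)).prod := hbound
    _ = _ := by simp only [hz]; rfl

end

theorem reexpansion_multiplicative_general {n : ℕ}
    (a b : List (Fin n) → ℂ) (p : Fin n → ℂ) (r : Fin n → ℝ)
    (hconv : ∀ z : Fin n → ℂ, (∀ i, ‖z i - p i‖ < r i) →
      Summable (fun I : List (Fin n) =>
        ‖a I‖ * ‖wprod (fun i => z i - p i) I‖))
    (hconv' : ∀ z : Fin n → ℂ, (∀ i, ‖z i - p i‖ < r i) →
      Summable (fun I : List (Fin n) =>
        ‖b I‖ * ‖wprod (fun i => z i - p i) I‖))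
    (q : Fin n → ℂ) (hq : ∀ i, ‖q i - p i‖ < r i) :
    ∀ J : List (Fin n),
      reCoeff (ncMul a b) p q J =
        ncMul (reCoeff a p q) (reCoeff b p q) J := by
  intro J
  have ha i := summable_norm_mul_taylorWeight a p q r hconv hq (J.take i)
  have hb i := summable_norm_mul_taylorWeight b p q r hconv' hq (J.drop i)
  have hsplit (z : List (Fin n) × List (Fin n)) :
      a z.1 * b z.2 * taylorWeight p q (z.1 ++ z.2) J =
        ∑ i ∈ Finset.range (J.length + 1),
          a z.1 * taylorWeight p q z.1 (J.take i) * (b z.2 * taylorWeight p q z.2 (J.drop i)) := by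
    rw [taylorWeight_append, Finset.mul_sum]
    exact Finset.sum_congr rfl fun _ _ => by ring
  have hterm i : Summable fun z : List (Fin n) × List (Fin n) =>
      a z.1 * taylorWeight p q z.1 (J.take i) * (b z.2 * taylorWeight p q z.2 (J.drop i)) :=
    ((ha i).mul_norm (hb i)).of_norm
  calc reCoeff (ncMul a b) p q J
      = ∑' K : List (Fin n), ∑ i ∈ Finset.range (K.length + 1),
          a (K.take i) * b (K.drop i) * taylorWeight p q (K.take i ++ K.drop i) J := by
        simp only [reCoeff_eq_tsum, ncMul, Finset.sum_mul, List.take_append_drop]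
    _ = ∑' z : List (Fin n) × List (Fin n), a z.1 * b z.2 * taylorWeight p q (z.1 ++ z.2) J :=
        tsum_sum_range_take_drop <| (summable_sum fun i _ => hterm i).congr fun z => (hsplit z).symm
    _ = ∑ i ∈ Finset.range (J.length + 1), ∑' z : List (Fin n) × List (Fin n),
          a z.1 * taylorWeight p q z.1 (J.take i) * (b z.2 * taylorWeight p q z.2 (J.drop i)) := by
        rw [tsum_congr hsplit, Summable.tsum_finsetSum fun i _ => hterm i]
    _ = ncMul (reCoeff a p q) (reCoeff b p q) J := by
        simp only [ncMul, reCoeff_eq_tsum, tsum_mul_tsum_of_summable_norm (ha _) (hb _)]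

/-- Taylor re-expansion is multiplicative:
`α(p,q)(f·f̃) = α(p,q)(f)·α(p,q)(f̃)` for noncommutative power series
convergent on `P(p,r)` and `q ∈ P(p,r)`. -/
theorem reexpansion_multiplicative {n : ℕ}
    (a b : List (Fin n) → ℂ) (p : Fin n → ℂ) (r : Fin n → ℝ)
    (hr : ∀ i, 0 < r i)
    (hconv : ∀ z : Fin n → ℂ, (∀ i, ‖z i - p i‖ < r i) →
      Summable (fun I : List (Fin n) =>
        ‖a I‖ * ‖wprod (fun i => z i - p i) I‖))
    (hconv' : ∀ z : Fin n → ℂ, (∀ i, ‖z i - p i‖ < r i) →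
      Summable (fun I : List (Fin n) =>
        ‖b I‖ * ‖wprod (fun i => z i - p i) I‖))
    (q : Fin n → ℂ) (hq : ∀ i, ‖q i - p i‖ < r i) :
    ∀ J : List (Fin n),
      reCoeff (ncMul a b) p q J =
        ncMul (reCoeff a p q) (reCoeff b p q) J :=
  reexpansion_multiplicative_general a b p r hconv hconv' q hq
end

section
/- The re-expansion maps are compatible with abelization and evaluation: if f = Σ_I a_I (x−p)^I converges on P(p,r) and q ∈ P(p,r), then the abelization of f_q := Σ_J a_J(q)(x−q)^J converges on any polydisk P(q,r') ⊆ P(p,r) and represents there the same holomorphic function as the abelization of f; in particular (f_q)(z) = f(z) for z ∈ P(q,r'). -/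
/-! Expanding each factor of `(z − p)^I = ∏ₖ ((q − p)_{Iₖ} + (z − q)_{Iₖ})` and grouping
the terms by the sub-word `J` of positions where the second summand was chosen gives the
binomial formula `(z − p)^I = Σ_J (I choose J) (q − p)^{I−J} (z − q)^J`. Multiplying by `a_I`
yields a double series in `(I, J)`: summing over `I` first gives the re-expansion at `z`,
summing over `J` first gives `f(z)`, so the two agree once the double series converges
absolutely. Its series of norms is the same double series with every letter replaced by its
modulus, i.e. the expansion of `Σ_I |a_I| ∏ (|q − p| + |z − q|)^I`. That is the absolute
series of `f` at the point `z'` with `z' − q` of modulus `|z − q|` pointing in the direction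
of `q − p`, and `z' ∈ P(q, r') ⊆ P(p, r)`. -/

section

open Finset

variable {n : ℕ}

def subwordAt (I : List (Fin n)) (S : Finset (Fin I.length)) : List (Fin n) :=
  (S.sort (· ≤ ·)).map I.get

theorem length_subwordAt (I : List (Fin n)) (S : Finset (Fin I.length)) :
    (subwordAt I S).length = S.card := by
  simp [subwordAt]

theorem coe_subwordAt (I : List (Fin n)) (S : Finset (Fin I.length)) :
    (subwordAt I S : Multiset (Fin n)) = S.val.map I.get := by
  rw [subwordAt, ← Multiset.map_coe, Finset.sort_eq]

theorem coe_sub_subwordAt (I : List (Fin n)) (S : Finset (Fin I.length)) :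
    (I : Multiset (Fin n)) - subwordAt I S = (univ \ S).val.map I.get := by
  have hsplit : (univ : Finset (Fin I.length)).val = S.val + (univ \ S).val := by
    rw [Finset.sdiff_val, add_tsub_cancel_of_le (Finset.val_le_iff.mpr (subset_univ S))]
  have hI : (I : Multiset (Fin n)) = (univ : Finset (Fin I.length)).val.map I.get := by
    rw [Fin.univ_val_map, List.ofFn_get]
  rw [coe_subwordAt, hI, hsplit, Multiset.map_add, add_tsub_cancel_left]

theorem get_subwordAt (I : List (Fin n)) (S : Finset (Fin I.length)) {k : ℕ}
    (h : S.card = k) (i : Fin k) (hi : i.1 < (subwordAt I S).length) :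
    (subwordAt I S).get ⟨i.1, hi⟩ = I.get (S.orderEmbOfFin h i) := by
  simp [subwordAt, Finset.orderEmbOfFin_apply]

theorem subwordAt_sublist (I : List (Fin n)) (S : Finset (Fin I.length)) :
    (subwordAt I S).Sublist I :=
  List.sublist_iff_exists_fin_orderEmbedding_get_eq.mpr
    ⟨S.orderEmbOfFin (length_subwordAt I S).symm, fun k => get_subwordAt I S _ k k.2⟩

theorem subwordAt_eq_iff (I J : List (Fin n)) (S : Finset (Fin I.length)) :
    subwordAt I S = J ↔
      ∃ h : S.card = J.length, ∀ k, J.get k = I.get (S.orderEmbOfFin h k) := by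
  constructor
  · rintro rfl
    exact ⟨(length_subwordAt I S).symm, fun k => get_subwordAt I S _ k k.2⟩
  · rintro ⟨h, hJ⟩
    refine List.ext_get (by rw [length_subwordAt, h]) fun m h₁ h₂ => ?_
    exact (get_subwordAt I S h ⟨m, h₂⟩ h₁).trans (hJ ⟨m, h₂⟩).symm

theorem StrictMono.orderEmbOfFin_image_univ {k m : ℕ} {α : Fin k → Fin m}
    (hα : StrictMono α) (h : (univ.image α).card = k) :
    ⇑((univ.image α).orderEmbOfFin h) = α :=
  (Finset.orderEmbOfFin_unique h (fun x => mem_image_of_mem α (mem_univ x)) hα).symm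

theorem chooseCount_eq_card_filter_subwordAt (I J : List (Fin n)) :
    chooseCount I J = #{S : Finset (Fin I.length) | subwordAt I S = J} := by
  set A := {α : Fin J.length → Fin I.length | StrictMono α ∧ ∀ k, J.get k = I.get (α k)}
  have hcard {α : Fin J.length → Fin I.length} (hα : StrictMono α) :
      (univ.image α).card = J.length := by
    rw [card_image_of_injective _ hα.injective, card_univ, Fintype.card_fin]
  have hinj : Set.InjOn (fun α => univ.image α) A := by
    intro α hα β hβ hαβ
    have hαβ' : univ.image α = univ.image β := hαβ
    rw [← hα.1.orderEmbOfFin_image_univ (hcard hα.1),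
      ← hβ.1.orderEmbOfFin_image_univ (hcard hβ.1)]
    simp only [hαβ']
  have himage : (fun α => univ.image α) '' A = {S | subwordAt I S = J} := by
    ext S
    simp only [Set.mem_image, Set.mem_ofPred_eq, subwordAt_eq_iff, A]
    constructor
    · rintro ⟨α, ⟨hα, hJ⟩, rfl⟩
      exact ⟨hcard hα, by rwa [hα.orderEmbOfFin_image_univ]⟩
    · rintro ⟨h, hJ⟩
      refine ⟨S.orderEmbOfFin h, ⟨(S.orderEmbOfFin h).strictMono, hJ⟩, ?_⟩
      apply Finset.coe_injective
      rw [coe_image, coe_univ, Set.image_univ, Finset.range_orderEmbOfFin]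
  rw [chooseCount, ← hinj.ncard_image, himage, ← Set.ncard_coe_finset]
  simp

theorem chooseCount_eq_zero_of_not_sublist {I J : List (Fin n)} (h : ¬J.Sublist I) :
    chooseCount I J = 0 := by
  rw [chooseCount, Set.ncard_eq_zero, Set.eq_empty_iff_forall_notMem]
  rintro α ⟨hmono, hcomp⟩
  exact h (List.sublist_iff_exists_fin_orderEmbedding_get_eq.mpr
    ⟨OrderEmbedding.ofStrictMono α hmono, hcomp⟩)

section Binomial

variable {R : Type*} [CommSemiring R]

theorem prod_map_add_eq_sum_chooseCount (u v : Fin n → R) (I : List (Fin n)) :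
    (I.map fun i => u i + v i).prod =
      ∑ J ∈ I.sublists.toFinset,
        (chooseCount I J : R) * (((I : Multiset (Fin n)) - J).map u).prod * (J.map v).prod := by
  have hsubword (S : Finset (Fin I.length)) :
      (∏ k ∈ S, v (I.get k)) * ∏ k ∈ univ \ S, u (I.get k) =
        ((subwordAt I S).map v).prod * (((I : Multiset (Fin n)) - subwordAt I S).map u).prod := by
    rw [coe_sub_subwordAt, prod_eq_multiset_prod, prod_eq_multiset_prod, ← Multiset.prod_coe,
      ← Multiset.map_coe, coe_subwordAt, Multiset.map_map, Multiset.map_map]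
    rfl
  have hsublist (S : Finset (Fin I.length)) : subwordAt I S ∈ I.sublists.toFinset :=
    List.mem_toFinset.mpr (List.mem_sublists.mpr (subwordAt_sublist I S))
  calc (I.map fun i => u i + v i).prod
      = ∏ k : Fin I.length, (v (I.get k) + u (I.get k)) := by
        conv_lhs => rw [← List.ofFn_get I, List.map_ofFn, List.prod_ofFn]
        exact prod_congr rfl fun k _ => add_comm _ _
    _ = ∑ S : Finset (Fin I.length),
          (∏ k ∈ S, v (I.get k)) * ∏ k ∈ univ \ S, u (I.get k) := by
        rw [prod_add, powerset_univ]
    _ = ∑ J ∈ I.sublists.toFinset, ∑ S with subwordAt I S = J,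
          (∏ k ∈ S, v (I.get k)) * ∏ k ∈ univ \ S, u (I.get k) :=
        (sum_fiberwise_of_maps_to (fun S _ => hsublist S) _).symm
    _ = _ := by
        refine sum_congr rfl fun J _ => ?_
        rw [sum_congr rfl fun S hS => (mem_filter.mp hS).2 ▸ hsubword S, sum_const,
          ← chooseCount_eq_card_filter_subwordAt, nsmul_eq_mul]
        ring

theorem hasSum_chooseCount_mul_prod_map [TopologicalSpace R] (u v : Fin n → R)
    (I : List (Fin n)) :
    HasSum (fun J => (chooseCount I J : R) * (((I : Multiset (Fin n)) - J).map u).prod *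
      (J.map v).prod) (I.map fun i => u i + v i).prod := by
  rw [prod_map_add_eq_sum_chooseCount]
  refine hasSum_sum_of_ne_finset_zero fun J hJ => ?_
  rw [chooseCount_eq_zero_of_not_sublist fun h =>
    hJ (List.mem_toFinset.mpr (List.mem_sublists.mpr h))]
  simp

end Binomial

theorem exists_norm_eq_norm_add_eq {E : Type*} [NormedAddCommGroup E] [NormedSpace ℝ E]
    (u w : E) : ∃ v : E, ‖v‖ = ‖w‖ ∧ ‖u + v‖ = ‖u‖ + ‖w‖ := by
  rcases eq_or_ne u 0 with rfl | hu
  · exact ⟨w, rfl, by simp⟩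
  · have hv : ‖(‖w‖ / ‖u‖) • u‖ = ‖w‖ := by
      rw [norm_smul, norm_div, norm_norm, norm_norm,
        div_mul_cancel₀ _ (norm_ne_zero_iff.mpr hu)]
    refine ⟨(‖w‖ / ‖u‖) • u, hv, ?_⟩
    rw [(SameRay.sameRay_nonneg_smul_right u (by positivity)).norm_add, hv]

theorem norm_list_prod_map {S : Type*} [SeminormedRing S] [NormMulClass S] [NormOneClass S]
    {ι : Type*} (w : ι → S) (l : List ι) :
    ‖(l.map w).prod‖ = (l.map fun i => ‖w i‖).prod := by
  rw [List.norm_prod, List.map_map]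
  rfl

theorem norm_multiset_prod_map {S : Type*} [SeminormedCommRing S] [NormMulClass S]
    [NormOneClass S] {ι : Type*} (w : ι → S) (s : Multiset ι) :
    ‖(s.map w).prod‖ = (s.map fun i => ‖w i‖).prod := by
  rw [show ‖(s.map w).prod‖ = normHom (s.map w).prod from rfl, map_multiset_prod,
    Multiset.map_map]
  rfl

theorem summable_norm_tsum_of_summable_norm_prod {α β E : Type*} [NormedAddCommGroup E]
    [CompleteSpace E] {F : α × β → E} (h : Summable fun x => ‖F x‖) :
    Summable fun b => ‖∑' a, F (a, b)‖ :=
  Summable.of_nonneg_of_le (fun _ => norm_nonneg _)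
    (fun b => norm_tsum_le_tsum_norm (h.prod_symm.prod_factor b)) h.prod_symm.prod

theorem summable_norm_chooseCount_mul (a : List (Fin n) → ℂ) (u w : Fin n → ℂ)
    (h : Summable fun I => ‖a I‖ * (I.map fun i => ‖u i‖ + ‖w i‖).prod) :
    Summable fun IJ : List (Fin n) × List (Fin n) =>
      ‖(chooseCount IJ.1 IJ.2 : ℂ) * a IJ.1 *
        (((IJ.1 : Multiset (Fin n)) - IJ.2).map u).prod * (IJ.2.map w).prod‖ := by
  have hrow (I : List (Fin n)) :
      HasSum (fun J => ‖(chooseCount I J : ℂ) * a I *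
        (((I : Multiset (Fin n)) - J).map u).prod * (J.map w).prod‖)
        (‖a I‖ * (I.map fun i => ‖u i‖ + ‖w i‖).prod) := by
    refine ((hasSum_chooseCount_mul_prod_map (fun i => ‖u i‖) (fun i => ‖w i‖) I).mul_left
      ‖a I‖).congr_fun fun J => ?_
    simp only [norm_mul, Complex.norm_natCast, norm_list_prod_map, norm_multiset_prod_map]
    ring
  refine (summable_prod_of_nonneg fun _ => norm_nonneg _).mpr
    ⟨fun I => (hrow I).summable, ?_⟩
  simpa only [(hrow _).tsum_eq] using h

end

theorem reexpansion_represents_same_function_general {n : ℕ}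
    (a : List (Fin n) → ℂ) (p : Fin n → ℂ) (r : Fin n → ℝ)
    (hconv : ∀ z : Fin n → ℂ, (∀ i, ‖z i - p i‖ < r i) →
      Summable (fun I : List (Fin n) =>
        ‖a I‖ * ‖wprod (fun i => z i - p i) I‖))
    (q : Fin n → ℂ) (r' : Fin n → ℝ)
    (hsub : ∀ z : Fin n → ℂ, (∀ i, ‖z i - q i‖ < r' i) →
      ∀ i, ‖z i - p i‖ < r i) :
    ∀ z : Fin n → ℂ, (∀ i, ‖z i - q i‖ < r' i) →
      Summable (fun J : List (Fin n) =>
        ‖reCoeff a p q J‖ *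
          ‖wprod (fun i => z i - q i) J‖) ∧
      (∑' J : List (Fin n), reCoeff a p q J * wprod (fun i => z i - q i) J) =
        ∑' I : List (Fin n), a I * wprod (fun i => z i - p i) I := by
  intro z hz
  set u : Fin n → ℂ := fun i => q i - p i
  set w : Fin n → ℂ := fun i => z i - q i
  set F : List (Fin n) × List (Fin n) → ℂ := fun IJ =>
    (chooseCount IJ.1 IJ.2 : ℂ) * a IJ.1 * diffProd p q IJ.1 IJ.2 * wprod w IJ.2
  choose v hv_norm hv_add using fun i => exists_norm_eq_norm_add_eq (u i) (w i)
  have hF : Summable fun IJ => ‖F IJ‖ := by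
    refine summable_norm_chooseCount_mul a u w ?_
    have hz' := hconv (q + v) (hsub _ fun i => by simpa [hv_norm] using hz i)
    have hz'p : (fun i => (q + v) i - p i) = fun i => u i + v i := by
      funext i; simp only [Pi.add_apply, u]; ring
    simpa only [hz'p, wprod, norm_list_prod_map, hv_add] using hz'
  have hrow (I : List (Fin n)) :
      HasSum (fun J => F (I, J)) (a I * wprod (fun i => z i - p i) I) := by
    have hzp : (fun i => z i - p i) = fun i => u i + w i := by
      funext i; simp only [u, w]; ring
    rw [hzp]
    exact ((hasSum_chooseCount_mul_prod_map u w I).mul_left (a I)).congr_fun fun J => by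
      simp only [F, diffProd, wprod]; ring
  have hcol (J : List (Fin n)) : ∑' I, F (I, J) = reCoeff a p q J * wprod w J := by
    rw [reCoeff, ← tsum_mul_right]
  refine ⟨?_, ?_⟩
  · simpa only [hcol, norm_mul] using summable_norm_tsum_of_summable_norm_prod hF
  · calc ∑' J, reCoeff a p q J * wprod w J
        = ∑' J, ∑' I, F (I, J) := tsum_congr fun J => (hcol J).symm
      _ = ∑' I, ∑' J, F (I, J) := hF.of_norm.tsum_comm
      _ = ∑' I, a I * wprod (fun i => z i - p i) I :=
          tsum_congr fun I => (hrow I).tsum_eq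

/-- if `f = Σ_I a_I (x−p)^I` converges on `P(p,r)` and
`P(q,r') ⊆ P(p,r)`, then the re-expansion `f_q = Σ_J a_J(q)(x−q)^J` converges
(absolutely) on `P(q,r')` and represents there the same function as `f`:
`(f_q)(z) = f(z)` for all `z ∈ P(q,r')`. -/
theorem reexpansion_represents_same_function {n : ℕ}
    (a : List (Fin n) → ℂ) (p : Fin n → ℂ) (r : Fin n → ℝ)
    (hr : ∀ i, 0 < r i)
    (hconv : ∀ z : Fin n → ℂ, (∀ i, ‖z i - p i‖ < r i) →
      Summable (fun I : List (Fin n) =>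
        ‖a I‖ * ‖wprod (fun i => z i - p i) I‖))
    (q : Fin n → ℂ) (r' : Fin n → ℝ) (hr' : ∀ i, 0 < r' i)
    (hsub : ∀ z : Fin n → ℂ, (∀ i, ‖z i - q i‖ < r' i) →
      ∀ i, ‖z i - p i‖ < r i) :
    ∀ z : Fin n → ℂ, (∀ i, ‖z i - q i‖ < r' i) →
      Summable (fun J : List (Fin n) =>
        ‖reCoeff a p q J‖ *
          ‖wprod (fun i => z i - q i) J‖) ∧
      (∑' J : List (Fin n), reCoeff a p q J * wprod (fun i => z i - q i) J) =
        ∑' I : List (Fin n), a I * wprod (fun i => z i - p i) I :=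
  reexpansion_represents_same_function_general a p r hconv q r' hsub
end
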